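/- arXiv:1703.00062 — 8 statements merged into one kernel-verified Lean document; each statement's English description precedes it below -/
import Mathlib

section
/- For every x ∈ ℝ and every y > 0 one has 2y + x² − θ(y·exp(x))² − 2·θ(y·exp(x)) ≥ 0, with equality if and only if x = y. -/
/-- For every `x ∈ ℝ` and `y > 0`, one has
`2y + x² - θ(y exp x)² - 2 θ(y exp x) ≥ 0`, with equality iff `x = y`.
Here `θ` is the Lambert-W type function characterized by `0 < θ y` and
`θ y * exp (θ y) = y` for `y > 0`. -/
theorem lambertW_quadratic_nonneg (θ : ℝ → ℝ)
    (hθ : ∀ y : ℝ, 0 < y → 0 < θ y ∧ θ y * Real.exp (θ y) = y) :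
    ∀ (x y : ℝ), 0 < y →
      0 ≤ 2 * y + x ^ 2 - (θ (y * Real.exp x)) ^ 2 - 2 * θ (y * Real.exp x) ∧
      (2 * y + x ^ 2 - (θ (y * Real.exp x)) ^ 2 - 2 * θ (y * Real.exp x) = 0 ↔ x = y) := by
  intro x y hy
  obtain ⟨ht0, hte⟩ := hθ (y * Real.exp x) (by positivity)
  set t := θ (y * Real.exp x) with htdef
  -- take logs
  have hlog : Real.log t + t = Real.log y + x := by
    have h := congrArg Real.log hte
    rwa [Real.log_mul ht0.ne' (Real.exp_pos _).ne',
      Real.log_mul hy.ne' (Real.exp_pos _).ne', Real.log_exp, Real.log_exp] at h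
  set L : ℝ := Real.log t - Real.log y with hL
  have hx : x = t + L := by rw [hL]; linarith
  -- key inequality: y - t + t * L ≥ 0, strict if t ≠ y
  have hlogdiv : Real.log (y / t) = Real.log y - Real.log t := Real.log_div hy.ne' ht0.ne'
  have key : 0 ≤ y - t + t * L := by
    have h1 : Real.log (y / t) ≤ y / t - 1 := Real.log_le_sub_one_of_pos (by positivity)
    rw [hlogdiv] at h1
    have h2 : t * (Real.log y - Real.log t) ≤ t * (y / t - 1) := by
      exact mul_le_mul_of_nonneg_left h1 ht0.le
    have h3 : t * (y / t - 1) = y - t := by field_simp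
    rw [hL]; nlinarith
  have keystrict : t ≠ y → 0 < y - t + t * L := by
    intro hne
    have h1 : Real.log (y / t) < y / t - 1 := by
      apply Real.log_lt_sub_one_of_pos (by positivity)
      intro h
      apply hne
      field_simp at h
      linarith
    rw [hlogdiv] at h1
    have h2 : t * (Real.log y - Real.log t) < t * (y / t - 1) := by
      exact mul_lt_mul_of_pos_left h1 ht0
    have h3 : t * (y / t - 1) = y - t := by field_simp
    rw [hL]; nlinarith
  constructor
  · rw [hx]; nlinarith [sq_nonneg L, key]
  · constructor
    · intro heq
      by_cases hty : t = y
      · have hL0 : L = 0 := by rw [hx] at heq; nlinarith [sq_nonneg L, hty]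
        rw [hx, hL0, hty]; ring
      · have := keystrict hty
        rw [hx] at heq; nlinarith [sq_nonneg L]
    · intro hxy
      have hty : t = y := by
        rcases lt_trichotomy t y with h | h | h
        · have := Real.log_lt_log ht0 h; linarith [hlog, hxy.symm ▸ hlog]
        · exact h
        · have := Real.log_lt_log hy h; linarith
      have hL0 : L = 0 := by rw [hL, hty]; ring
      rw [hx, hL0, hty]; ring
end

section
/- For every x ∈ ℝ and every y > 0 one has sqrt(x² + 2y − θ(y·exp(x))² − 2·θ(y·exp(x))) ≥ |x − θ(y·exp(x))|, with equality if and only if x = y. (The expression under the square root is nonnegative by the companion inequality 2y + x² − θ(y·exp(x))² − 2·θ(y·exp(x)) ≥ 0.) -/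
/-- For every `x ∈ ℝ` and `y > 0`,
`sqrt (x² + 2y - θ(y exp x)² - 2 θ(y exp x)) ≥ |x - θ(y exp x)|`, with equality
iff `x = y`.  Here `θ` is the Lambert-W type function characterized by
`0 < θ y` and `θ y * exp (θ y) = y` for `y > 0`. -/
theorem lambertW_sqrt_ge_abs (θ : ℝ → ℝ)
    (hθ : ∀ y : ℝ, 0 < y → 0 < θ y ∧ θ y * Real.exp (θ y) = y) :
    ∀ (x y : ℝ), 0 < y →
      |x - θ (y * Real.exp x)| ≤
        Real.sqrt (x ^ 2 + 2 * y - (θ (y * Real.exp x)) ^ 2 - 2 * θ (y * Real.exp x)) ∧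
      (Real.sqrt (x ^ 2 + 2 * y - (θ (y * Real.exp x)) ^ 2 - 2 * θ (y * Real.exp x))
          = |x - θ (y * Real.exp x)| ↔ x = y) := by
  intro x y hy
  have hpos : 0 < y * Real.exp x := by positivity
  obtain ⟨ht, hte⟩ := hθ (y * Real.exp x) hpos
  set t := θ (y * Real.exp x) with htdef
  have hy' : y = t * Real.exp (t - x) := by
    have hx : Real.exp x ≠ 0 := Real.exp_ne_zero x
    rw [Real.exp_sub]
    field_simp
    linarith [hte]
  have key : x ^ 2 + 2 * y - t ^ 2 - 2 * t - (x - t) ^ 2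
      = 2 * t * (Real.exp (t - x) - (t - x) - 1) := by
    rw [hy']; ring
  have hk : 0 ≤ Real.exp (t - x) - (t - x) - 1 := by
    linarith [Real.add_one_le_exp (t - x)]
  have hA : (x - t) ^ 2 ≤ x ^ 2 + 2 * y - t ^ 2 - 2 * t := by
    nlinarith [mul_nonneg ht.le hk]
  have hAnn : 0 ≤ x ^ 2 + 2 * y - t ^ 2 - 2 * t := le_trans (sq_nonneg _) hA
  have hle : |x - t| ≤ Real.sqrt (x ^ 2 + 2 * y - t ^ 2 - 2 * t) := by
    rw [← Real.sqrt_sq_eq_abs]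
    exact Real.sqrt_le_sqrt hA
  refine ⟨hle, ?_, ?_⟩
  · intro h
    have hsq : x ^ 2 + 2 * y - t ^ 2 - 2 * t = (x - t) ^ 2 := by
      have := congrArg (· ^ 2) h
      simpa [Real.sq_sqrt hAnn, sq_abs] using this
    have h0 : 2 * t * (Real.exp (t - x) - (t - x) - 1) = 0 := by linarith
    have h1 : Real.exp (t - x) - (t - x) - 1 = 0 := by
      rcases mul_eq_zero.mp h0 with h2 | h2
      · nlinarith
      · exact h2
    have hu : t - x = 0 := by
      by_contra hu
      have := Real.add_one_lt_exp hu
      linarith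
    have htx : t = x := by linarith
    rw [hy', htx]
    simp
  · intro hxy
    have hxpos : 0 < x := hxy ▸ hy
    have htex : t * Real.exp t = x * Real.exp x := by rw [hte, hxy]
    have htx : t = x := by
      rcases lt_trichotomy t x with h | h | h
      · nlinarith [Real.exp_lt_exp.mpr h, Real.exp_pos t, Real.exp_pos x]
      · exact h
      · nlinarith [Real.exp_lt_exp.mpr h, Real.exp_pos t, Real.exp_pos x]
    have : x ^ 2 + 2 * y - t ^ 2 - 2 * t = 0 := by
      rw [htx, ← hxy]; ring
    rw [this, htx]
    simp
end

section
/- For every x ∈ ℝ, every y > 0, and every z ∈ ℝ one has 2y + x² − θ(y·exp(x + z))² − 2·θ(y·exp(x + z)) ≥ 2y·(1 − exp(z)). In particular, if z ≤ 0 the left-hand side is nonnegative. -/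
/-- For every `x ∈ ℝ`, `y > 0`, `z ∈ ℝ`:
`2y + x² - θ(y exp (x+z))² - 2 θ(y exp (x+z)) ≥ 2y (1 - exp z)`; in particular the
left-hand side is nonnegative when `z ≤ 0`.  Here `θ` is the Lambert-W type function
characterized by `0 < θ y` and `θ y * exp (θ y) = y` for `y > 0`. -/
theorem lambertW_shifted_lower_bound (θ : ℝ → ℝ)
    (hθ : ∀ y : ℝ, 0 < y → 0 < θ y ∧ θ y * Real.exp (θ y) = y) :
    ∀ (x y z : ℝ), 0 < y →
      2 * y * (1 - Real.exp z) ≤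
        2 * y + x ^ 2 - (θ (y * Real.exp (x + z))) ^ 2 - 2 * θ (y * Real.exp (x + z)) ∧
      (z ≤ 0 →
        0 ≤ 2 * y + x ^ 2 - (θ (y * Real.exp (x + z))) ^ 2
            - 2 * θ (y * Real.exp (x + z))) := by
  intro x y z hy
  have hpos : 0 < y * Real.exp (x + z) := mul_pos hy (Real.exp_pos _)
  obtain ⟨ht, heq⟩ := hθ _ hpos
  set t := θ (y * Real.exp (x + z)) with htdef
  -- y * exp z = t * exp (t - x)
  have key : y * Real.exp z = t * Real.exp (t - x) := by
    have h1 : t * Real.exp t = y * Real.exp (x + z) := heq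
    have hx : Real.exp (x + z) = Real.exp x * Real.exp z := Real.exp_add x z
    have h2 : t * Real.exp (t - x) = t * Real.exp t / Real.exp x := by
      rw [Real.exp_sub]; ring
    rw [h2, h1, hx]
    field_simp
  have main : 2 * y * (1 - Real.exp z) ≤
      2 * y + x ^ 2 - t ^ 2 - 2 * t := by
    have h3 : 2 * (y * Real.exp z) + x ^ 2 - t ^ 2 - 2 * t
        = 2 * t * (Real.exp (t - x) - 1 - (t - x)) + (t - x) ^ 2 := by
      rw [key]; ring
    have h4 : 0 ≤ Real.exp (t - x) - 1 - (t - x) := by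
      have := Real.add_one_le_exp (t - x); linarith
    nlinarith [sq_nonneg (t - x)]
  refine ⟨main, fun hz => ?_⟩
  have : Real.exp z ≤ 1 := Real.exp_le_one_iff.mpr hz
  nlinarith
end

section
/- For every l ∈ ℝ and every y > 0 one has h(l, y) ≤ y·exp(l), i.e. l − sqrt(l² + 2y·(l·exp(l) + 1 − exp(l))) ≤ 0, with equality if and only if l = 0. -/
/-- The dynamic default insurance price function
`h(l, y) = l + y·exp l − sqrt(l² + 2y(l·exp l + 1 − exp l))`. -/
noncomputable def insurancePrice (l y : ℝ) : ℝ :=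
  l + y * Real.exp l -
    Real.sqrt (l ^ 2 + 2 * y * (l * Real.exp l + 1 - Real.exp l))

lemma key_nonneg (l : ℝ) : 0 ≤ l * Real.exp l + 1 - Real.exp l := by
  have h : (-l) + 1 ≤ Real.exp (-l) := Real.add_one_le_exp _
  have hpos : (0:ℝ) < Real.exp l := Real.exp_pos l
  have := mul_le_mul_of_nonneg_left h hpos.le
  rw [← Real.exp_add, add_neg_cancel, Real.exp_zero] at this
  nlinarith

lemma key_pos (l : ℝ) (hl : l ≠ 0) : 0 < l * Real.exp l + 1 - Real.exp l := by
  have h : (-l) + 1 < Real.exp (-l) := Real.add_one_lt_exp (neg_ne_zero.mpr hl)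
  have hpos : (0:ℝ) < Real.exp l := Real.exp_pos l
  have := mul_lt_mul_of_pos_left h hpos
  rw [← Real.exp_add, add_neg_cancel, Real.exp_zero] at this
  nlinarith

/-- For every `l ∈ ℝ` and `y > 0`, `h(l, y) ≤ y·exp l`, i.e.
`l − sqrt(l² + 2y(l·exp l + 1 − exp l)) ≤ 0`, with equality iff `l = 0`. -/
theorem insurancePrice_le_intensity :
    ∀ (l y : ℝ), 0 < y →
      insurancePrice l y ≤ y * Real.exp l ∧
      l - Real.sqrt (l ^ 2 + 2 * y * (l * Real.exp l + 1 - Real.exp l)) ≤ 0 ∧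
      (insurancePrice l y = y * Real.exp l ↔ l = 0) := by
  intro l y hy
  set E := l * Real.exp l + 1 - Real.exp l with hE
  have hEnn : 0 ≤ E := key_nonneg l
  have harg : 0 ≤ 2 * y * E := by positivity
  have hsq : |l| ≤ Real.sqrt (l ^ 2 + 2 * y * E) := by
    rw [← Real.sqrt_sq_eq_abs]
    exact Real.sqrt_le_sqrt (by linarith)
  have hle : l - Real.sqrt (l ^ 2 + 2 * y * E) ≤ 0 := by
    have := le_abs_self l
    linarith
  refine ⟨by unfold insurancePrice; linarith, hle, ?_⟩
  constructor
  · intro heq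
    have h1 : l = Real.sqrt (l ^ 2 + 2 * y * E) := by
      unfold insurancePrice at heq; linarith
    by_contra hl
    have hEpos : 0 < E := key_pos l hl
    have hlnn : 0 ≤ l := h1 ▸ Real.sqrt_nonneg _
    have := Real.sq_sqrt (by positivity : (0:ℝ) ≤ l ^ 2 + 2 * y * E)
    rw [← h1] at this
    nlinarith
  · intro hl
    subst hl
    simp [insurancePrice, hE]
end

section
/- Fix y > 0 and set l₀ := log((sqrt(1 + 2y) − 1)/y). Then 0 < (sqrt(1 + 2y) − 1)/y < 1, so l₀ < 0; moreover h(l₀, y) = 0, h(l, y) > 0 for every l > l₀, and h(l, y) < 0 for every l < l₀. -/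
/-- Fix `y > 0` and set `l₀ = log((sqrt(1+2y) − 1)/y)`.  Then
`0 < (sqrt(1+2y) − 1)/y < 1` so `l₀ < 0`; moreover `h(l₀, y) = 0`, `h(l, y) > 0` for
`l > l₀`, and `h(l, y) < 0` for `l < l₀`. -/
theorem insurancePrice_sign_threshold (y : ℝ) (hy : 0 < y) :
    (0 < (Real.sqrt (1 + 2 * y) - 1) / y ∧ (Real.sqrt (1 + 2 * y) - 1) / y < 1) ∧
    Real.log ((Real.sqrt (1 + 2 * y) - 1) / y) < 0 ∧
    insurancePrice (Real.log ((Real.sqrt (1 + 2 * y) - 1) / y)) y = 0 ∧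
    (∀ l : ℝ, Real.log ((Real.sqrt (1 + 2 * y) - 1) / y) < l → 0 < insurancePrice l y) ∧
    (∀ l : ℝ, l < Real.log ((Real.sqrt (1 + 2 * y) - 1) / y) → insurancePrice l y < 0) := by
  set s : ℝ := Real.sqrt (1 + 2 * y) with hs
  have hsnn : 0 ≤ s := Real.sqrt_nonneg _
  have hs2 : s ^ 2 = 1 + 2 * y := Real.sq_sqrt (by linarith)
  have hs1 : 1 < s := by nlinarith
  set x₀ : ℝ := (s - 1) / y with hx₀
  have hx0pos : 0 < x₀ := div_pos (by linarith) hy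
  have hx0lt1 : x₀ < 1 := by
    rw [div_lt_one hy]; nlinarith
  set l₀ : ℝ := Real.log x₀ with hl₀
  have hl0neg : l₀ < 0 := Real.log_neg hx0pos hx0lt1
  have hexp0 : Real.exp l₀ = x₀ := Real.exp_log hx0pos
  have hyx : y * x₀ = s - 1 := by
    show y * ((s - 1) / y) = s - 1
    field_simp
  have hg0 : y * x₀ ^ 2 + 2 * x₀ - 2 = 0 := by
    have h1 : y * x₀ ^ 2 = (s - 1) * x₀ := by rw [sq]; nlinarith [hyx]
    rw [h1, hx₀]; field_simp; nlinarith
  -- A₀ > 0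
  have hx0inv : x₀⁻¹ = (s + 1) / 2 := by
    rw [hx₀, inv_div, div_eq_div_iff (by linarith) (by norm_num)]
    nlinarith
  have hinvlt : Real.log x₀⁻¹ < x₀⁻¹ - 1 :=
    Real.log_lt_sub_one_of_pos (by positivity) (by
      rw [hx0inv]; intro h; nlinarith)
  have hloginv : Real.log x₀⁻¹ = -l₀ := by rw [Real.log_inv]
  have hA0pos : 0 < l₀ + y * x₀ := by
    rw [hyx]
    rw [hloginv, hx0inv] at hinvlt
    linarith
  -- discriminant identity
  have hid : ∀ l : ℝ, (l + y * Real.exp l) ^ 2 -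
      (l ^ 2 + 2 * y * (l * Real.exp l + 1 - Real.exp l)) =
      y * (y * (Real.exp l) ^ 2 + 2 * Real.exp l - 2) := by
    intro l; ring
  have hBnn : ∀ l : ℝ, 0 ≤ l ^ 2 + 2 * y * (l * Real.exp l + 1 - Real.exp l) := by
    intro l
    have := key_nonneg l
    nlinarith [sq_nonneg l]
  refine ⟨⟨hx0pos, hx0lt1⟩, hl0neg, ?_, ?_, ?_⟩
  · -- h(l₀, y) = 0
    have hB0 : l₀ ^ 2 + 2 * y * (l₀ * Real.exp l₀ + 1 - Real.exp l₀) =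
        (l₀ + y * Real.exp l₀) ^ 2 := by
      have := hid l₀
      rw [hexp0] at this ⊢
      nlinarith [hg0]
    unfold insurancePrice
    rw [hB0, Real.sqrt_sq (by rw [hexp0]; linarith)]
    ring
  · -- h(l, y) > 0 for l > l₀
    intro l hl
    have he : x₀ < Real.exp l := by rw [← hexp0]; exact Real.exp_lt_exp.mpr hl
    have hepos := Real.exp_pos l
    have hg : 0 < y * (Real.exp l) ^ 2 + 2 * Real.exp l - 2 := by
      nlinarith [mul_pos (sub_pos.mpr he) (show (0:ℝ) < y * (Real.exp l + x₀) + 2 by positivity)]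
    have hApos : 0 < l + y * Real.exp l := by
      have := mul_lt_mul_of_pos_left he hy
      linarith
    have hBlt : l ^ 2 + 2 * y * (l * Real.exp l + 1 - Real.exp l) <
        (l + y * Real.exp l) ^ 2 := by
      have h1 := hid l
      have h2 := mul_pos hy hg
      linarith
    have hsqrt : Real.sqrt (l ^ 2 + 2 * y * (l * Real.exp l + 1 - Real.exp l)) <
        l + y * Real.exp l := by
      calc Real.sqrt (l ^ 2 + 2 * y * (l * Real.exp l + 1 - Real.exp l))
          < Real.sqrt ((l + y * Real.exp l) ^ 2) := Real.sqrt_lt_sqrt (hBnn l) hBlt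
        _ = l + y * Real.exp l := Real.sqrt_sq hApos.le
    unfold insurancePrice; linarith
  · -- h(l, y) < 0 for l < l₀
    intro l hl
    have he : Real.exp l < x₀ := by rw [← hexp0]; exact Real.exp_lt_exp.mpr hl
    have hepos := Real.exp_pos l
    have hg : y * (Real.exp l) ^ 2 + 2 * Real.exp l - 2 < 0 := by
      nlinarith [mul_pos (sub_pos.mpr he) (show (0:ℝ) < y * (x₀ + Real.exp l) + 2 by positivity)]
    have hBgt : (l + y * Real.exp l) ^ 2 <
        l ^ 2 + 2 * y * (l * Real.exp l + 1 - Real.exp l) := by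
      have h1 := hid l
      have h2 := mul_neg_of_pos_of_neg hy hg
      linarith
    have hsqrt : l + y * Real.exp l <
        Real.sqrt (l ^ 2 + 2 * y * (l * Real.exp l + 1 - Real.exp l)) := by
      calc l + y * Real.exp l ≤ |l + y * Real.exp l| := le_abs_self _
        _ = Real.sqrt ((l + y * Real.exp l) ^ 2) := (Real.sqrt_sq_eq_abs _).symm
        _ < _ := Real.sqrt_lt_sqrt (sq_nonneg _) hBgt
    unfold insurancePrice; linarith
end

section
/- For every l ∈ ℝ and every y > 0, the quantity h(l, y) has the same sign as (y/2)·exp(2l) + exp(l) − 1; that is, h(l, y) > 0 if and only if (y/2)·exp(2l) + exp(l) − 1 > 0, h(l, y) < 0 if and only if (y/2)·exp(2l) + exp(l) − 1 < 0, and h(l, y) = 0 if and only if (y/2)·exp(2l) + exp(l) − 1 = 0. -/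
lemma le_mul_exp_aux (l : ℝ) : Real.exp l ≤ l * Real.exp l + 1 := by
  have h := Real.add_one_le_exp (-l)
  have he : 0 < Real.exp l := Real.exp_pos l
  have : (-l + 1) * Real.exp l ≤ Real.exp (-l) * Real.exp l := by
    exact mul_le_mul_of_nonneg_right h he.le
  rw [← Real.exp_add] at this
  simp at this
  nlinarith

lemma neg_case_aux (l y : ℝ) (hy : 0 < y) (ha : l + y * Real.exp l ≤ 0) :
    y / 2 * Real.exp (2 * l) + Real.exp l - 1 < 0 := by
  have he : 0 < Real.exp l := Real.exp_pos l
  have hl : l < 0 := by nlinarith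
  have h2 : Real.exp (2 * l) = Real.exp l ^ 2 := by
    rw [two_mul, Real.exp_add]; ring
  -- y * exp l ≤ -l
  have hyl : y * Real.exp l ≤ -l := by linarith
  -- exp(-l) ≥ 1 - l
  have h3 := Real.add_one_le_exp (-l)
  have h4 : (-l + 1) * Real.exp l ≤ 1 := by
    have := mul_le_mul_of_nonneg_right h3 he.le
    rw [← Real.exp_add] at this
    simpa using this
  -- y/2 * exp(2l) ≤ (-l/2) * exp l
  nlinarith [mul_le_mul_of_nonneg_right hyl he.le]

/-- For every `l ∈ ℝ` and `y > 0`, `h(l, y)` has the same sign as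
`(y/2)·exp(2l) + exp l − 1`. -/
theorem insurancePrice_sign (l y : ℝ) (hy : 0 < y) :
    (0 < insurancePrice l y ↔ 0 < y / 2 * Real.exp (2 * l) + Real.exp l - 1) ∧
    (insurancePrice l y < 0 ↔ y / 2 * Real.exp (2 * l) + Real.exp l - 1 < 0) ∧
    (insurancePrice l y = 0 ↔ y / 2 * Real.exp (2 * l) + Real.exp l - 1 = 0) := by
  set a := l + y * Real.exp l with ha
  set R := l ^ 2 + 2 * y * (l * Real.exp l + 1 - Real.exp l) with hR
  set S := y / 2 * Real.exp (2 * l) + Real.exp l - 1 with hS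
  have he : 0 < Real.exp l := Real.exp_pos l
  have h2 : Real.exp (2 * l) = Real.exp l ^ 2 := by
    rw [two_mul, Real.exp_add]; ring
  have hR0 : 0 ≤ R := by
    have := le_mul_exp_aux l
    have : 0 ≤ l * Real.exp l + 1 - Real.exp l := by linarith
    nlinarith
  have hkey : a ^ 2 - R = 2 * y * S := by
    rw [ha, hR, hS, h2]; ring
  have hsq : Real.sqrt R ^ 2 = R := Real.sq_sqrt hR0
  have hsn : 0 ≤ Real.sqrt R := Real.sqrt_nonneg R
  have hIns : insurancePrice l y = a - Real.sqrt R := rfl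
  have haS : a ≤ 0 → S < 0 := fun h => neg_case_aux l y hy h
  have hpos : 0 < insurancePrice l y ↔ 0 < S := by
    rw [hIns]
    constructor
    · intro h
      have haP : 0 < a := by linarith
      have : R < a ^ 2 := by nlinarith
      nlinarith
    · intro h
      have haP : 0 < a := by
        by_contra hc
        push_neg at hc
        exact absurd h (not_lt.mpr (haS hc).le)
      have hRa : R < a ^ 2 := by nlinarith
      have : Real.sqrt R < a := by
        nlinarith [Real.sqrt_lt_sqrt hR0 hRa, Real.sqrt_sq haP.le]
      linarith
  have hneg : insurancePrice l y < 0 ↔ S < 0 := by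
    rw [hIns]
    constructor
    · intro h
      rcases le_or_gt a 0 with hc | hc
      · exact haS hc
      · have : a ^ 2 < R := by nlinarith
        nlinarith
    · intro h
      have hRa : a ^ 2 < R := by nlinarith
      have h1 : Real.sqrt (a ^ 2) < Real.sqrt R := Real.sqrt_lt_sqrt (sq_nonneg a) hRa
      have h2' : Real.sqrt (a ^ 2) = |a| := Real.sqrt_sq_eq_abs a
      have := le_abs_self a
      linarith [h2' ▸ h1]
  refine ⟨hpos, hneg, ?_⟩
  constructor
  · intro h
    rcases lt_trichotomy S 0 with hc | hc | hc
    · exact absurd (hneg.mpr hc) (by rw [h]; exact lt_irrefl 0)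
    · exact hc
    · exact absurd (hpos.mpr hc) (by rw [h]; exact lt_irrefl 0)
  · intro h
    rcases lt_trichotomy (insurancePrice l y) 0 with hc | hc | hc
    · exact absurd (hneg.mp hc) (by rw [h]; exact lt_irrefl 0)
    · exact hc
    · exact absurd (hpos.mp hc) (by rw [h]; exact lt_irrefl 0)
end

section
/- Let K ⊆ ℝ^d be a compact set, let σ : K → ℝ and γ : K → ℝ be continuous with σ(x) > 0 and γ(x) > 0 for all x ∈ K, let μ : K → ℝ be continuous, let χ : K → ℝ be continuous with 0 ≤ χ(x) ≤ 1 for all x ∈ K, and let α > 0. Define, for x ∈ K and z ∈ ℝ, a(x, z) := (σ(x)²·χ(x)/(2α)) · ( 2γ(x)/σ(x)² + μ(x)²/σ(x)⁴ − θ(Y(x,z))² − 2·θ(Y(x,z)) ), where Y(x, z) := (γ(x)/σ(x)²)·exp(μ(x)/σ(x)² + α·z). Then there exists a constant C ≥ 0 such that z·a(x, z) ≤ C·(1 + z²) for all x ∈ K and all z ∈ ℝ. -/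
set_option maxHeartbeats 1000000


/-- One-sided growth bound for the HJB nonlinearity at `p = 0` (the paper's
Lemma on `ǎⁿ(x, z, 0)`): on a compact set `K`, with continuous `σ, γ > 0`,
continuous `μ`, a continuous cutoff `0 ≤ χ ≤ 1`, risk aversion `α > 0`, and `θ`
the Lambert-W type function (`0 < θ y`, `θ y · exp (θ y) = y` for `y > 0`),
there is a constant `C ≥ 0` with `z · a(x, z) ≤ C (1 + z²)` for all `x ∈ K`, `z ∈ ℝ`,
where
`a(x,z) = (σ² χ /(2α)) (2γ/σ² + μ²/σ⁴ − θ(Y)² − 2θ(Y))`,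
`Y = (γ/σ²) exp(μ/σ² + α z)`. -/
theorem hjb_nonlinearity_growth_bound_at_zero {d : ℕ}
    (K : Set (EuclideanSpace ℝ (Fin d))) (hK : IsCompact K)
    (σ γ μ χ : EuclideanSpace ℝ (Fin d) → ℝ)
    (hσ : ContinuousOn σ K) (hγ : ContinuousOn γ K)
    (hμ : ContinuousOn μ K) (hχ : ContinuousOn χ K)
    (hσ_pos : ∀ x ∈ K, 0 < σ x) (hγ_pos : ∀ x ∈ K, 0 < γ x)
    (hχ01 : ∀ x ∈ K, 0 ≤ χ x ∧ χ x ≤ 1)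
    (α : ℝ) (hα : 0 < α)
    (θ : ℝ → ℝ)
    (hθ : ∀ y : ℝ, 0 < y → 0 < θ y ∧ θ y * Real.exp (θ y) = y) :
    ∃ C : ℝ, 0 ≤ C ∧ ∀ x ∈ K, ∀ z : ℝ,
      z * ((σ x ^ 2 * χ x / (2 * α)) *
        (2 * γ x / σ x ^ 2 + μ x ^ 2 / σ x ^ 4
          - (θ (γ x / σ x ^ 2 * Real.exp (μ x / σ x ^ 2 + α * z))) ^ 2
          - 2 * θ (γ x / σ x ^ 2 * Real.exp (μ x / σ x ^ 2 + α * z))))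
      ≤ C * (1 + z ^ 2) := by
  obtain ⟨S, hS⟩ := hK.exists_bound_of_continuousOn hσ
  obtain ⟨G, hG⟩ := hK.exists_bound_of_continuousOn hγ
  obtain ⟨M, hM⟩ := hK.exists_bound_of_continuousOn hμ
  have hinvc : ContinuousOn (fun x => (σ x ^ 2)⁻¹) K :=
    (hσ.pow 2).inv₀ (fun x hx => (pow_pos (hσ_pos x hx) 2).ne')
  obtain ⟨I, hI⟩ := hK.exists_bound_of_continuousOn hinvc
  set S' := max S 0 with hS'def
  set G' := max G 0 with hG'def
  set M' := max M 0 with hM'def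
  set I' := max I 0 with hI'def
  have hS'0 : (0:ℝ) ≤ S' := le_max_right _ _
  have hG'0 : (0:ℝ) ≤ G' := le_max_right _ _
  have hM'0 : (0:ℝ) ≤ M' := le_max_right _ _
  have hI'0 : (0:ℝ) ≤ I' := le_max_right _ _
  set MY := G' * I' * Real.exp (M' * I') with hMYdef
  have hMY0 : 0 ≤ MY := mul_nonneg (mul_nonneg hG'0 hI'0) (Real.exp_pos _).le
  set Cc := S' ^ 2 / (2 * α) with hCcdef
  have hCc0 : 0 ≤ Cc := div_nonneg (sq_nonneg _) (by linarith)
  have hCB0 : 0 ≤ 2 * G' * I' + M' ^ 2 * I' ^ 2 :=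
    add_nonneg (mul_nonneg (by linarith) hI'0) (mul_nonneg (sq_nonneg _) (sq_nonneg _))
  set L := 2 * G' * I' + M' ^ 2 * I' ^ 2 + MY ^ 2 + 2 * MY with hLdef
  have hL0 : 0 ≤ L := by
    have := sq_nonneg MY
    simp only [hLdef]; linarith
  have hC0 : 0 ≤ Cc * L := mul_nonneg hCc0 hL0
  refine ⟨Cc * L, hC0, ?_⟩
  intro x hx z
  have hs : 0 < σ x := hσ_pos x hx
  have hs2 : 0 < σ x ^ 2 := pow_pos hs 2
  have hiv : 0 < (σ x ^ 2)⁻¹ := inv_pos.2 hs2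
  have hσx : σ x ≤ S' := by
    have h1 : |σ x| ≤ S' := by
      have := hS x hx; rw [Real.norm_eq_abs] at this
      exact this.trans (le_max_left _ _)
    exact (le_abs_self _).trans h1
  have hγx : γ x ≤ G' := by
    have h1 : |γ x| ≤ G' := by
      have := hG x hx; rw [Real.norm_eq_abs] at this
      exact this.trans (le_max_left _ _)
    exact (le_abs_self _).trans h1
  have hμx : |μ x| ≤ M' := by
    have := hM x hx; rw [Real.norm_eq_abs] at this
    exact this.trans (le_max_left _ _)
  have hIx : (σ x ^ 2)⁻¹ ≤ I' := by
    have h1 : |(σ x ^ 2)⁻¹| ≤ I' := by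
      have := hI x hx; rw [Real.norm_eq_abs] at this
      exact this.trans (le_max_left _ _)
    exact (le_abs_self _).trans h1
  have hgd : γ x / σ x ^ 2 ≤ G' * I' := by
    rw [div_eq_mul_inv]
    exact mul_le_mul hγx hIx hiv.le hG'0
  have hgd0 : 0 ≤ γ x / σ x ^ 2 := div_nonneg (hγ_pos x hx).le hs2.le
  have hmd : |μ x / σ x ^ 2| ≤ M' * I' := by
    rw [abs_div, abs_of_pos hs2, div_eq_mul_inv]
    exact mul_le_mul hμx hIx hiv.le hM'0
  have hmd2 : μ x ^ 2 / σ x ^ 4 ≤ (M' * I') ^ 2 := by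
    have h4 : σ x ^ 4 = (σ x ^ 2) ^ 2 := by ring
    calc μ x ^ 2 / σ x ^ 4 = (μ x / σ x ^ 2) ^ 2 := by rw [div_pow, h4]
      _ = |μ x / σ x ^ 2| ^ 2 := (sq_abs _).symm
      _ ≤ (M' * I') ^ 2 := pow_le_pow_left₀ (abs_nonneg _) hmd 2
  set Yx := γ x / σ x ^ 2 * Real.exp (μ x / σ x ^ 2 + α * z) with hYxdef
  have hY0 : 0 < Yx := mul_pos (div_pos (hγ_pos x hx) hs2) (Real.exp_pos _)
  obtain ⟨hθ0, hθeq⟩ := hθ Yx hY0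
  set t := θ Yx with htdef
  have hexp1 : (1:ℝ) ≤ Real.exp t := by
    linarith [Real.add_one_le_exp t, hθ0]
  have htY : t ≤ Yx := by
    calc t = t * 1 := (mul_one t).symm
      _ ≤ t * Real.exp t := mul_le_mul_of_nonneg_left hexp1 hθ0.le
      _ = Yx := hθeq
  set c := σ x ^ 2 * χ x / (2 * α) with hcdef
  have hc0 : 0 ≤ c := div_nonneg (mul_nonneg hs2.le (hχ01 x hx).1) (by linarith)
  have hcC : c ≤ Cc := by
    have h1 : σ x ^ 2 * χ x ≤ S' ^ 2 := by
      nlinarith [(hχ01 x hx).1, (hχ01 x hx).2, hs2, pow_le_pow_left₀ hs.le hσx 2]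
    exact (div_le_div_iff_of_pos_right (by linarith)).2 h1
  have hbub : 2 * γ x / σ x ^ 2 + μ x ^ 2 / σ x ^ 4 ≤ 2 * G' * I' + M' ^ 2 * I' ^ 2 := by
    have h2 : 2 * γ x / σ x ^ 2 = 2 * (γ x / σ x ^ 2) := by ring
    nlinarith [hgd, hmd2, h2]
  have hb0 : 0 ≤ 2 * γ x / σ x ^ 2 + μ x ^ 2 / σ x ^ 4 := by
    have h2 : 2 * γ x / σ x ^ 2 = 2 * (γ x / σ x ^ 2) := by ring
    have h3 : 0 ≤ μ x ^ 2 / σ x ^ 4 := div_nonneg (sq_nonneg _) (by positivity)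
    linarith
  clear_value S' G' M' I' MY Cc L Yx t c
  rcases le_or_gt 0 z with hz | hz
  · -- z ≥ 0 : a ≤ Cc * L
    have haC : c * (2 * γ x / σ x ^ 2 + μ x ^ 2 / σ x ^ 4 - t ^ 2 - 2 * t) ≤ Cc * L := by
      have h1 := mul_le_mul hcC hbub hb0 hCc0
      have h2 : 0 ≤ c * (t ^ 2 + 2 * t) := mul_nonneg hc0 (by nlinarith [hθ0])
      have h3 : 0 ≤ Cc * (MY ^ 2 + 2 * MY) := mul_nonneg hCc0 (by nlinarith [hMY0])
      simp only [hLdef]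
      linarith [h1, h2, h3]
    linarith [mul_le_mul_of_nonneg_left haC hz, mul_nonneg hC0 hz,
      mul_nonneg hC0 (sq_nonneg (z - 1))]
  · -- z < 0 : a ≥ -(Cc * L)
    have hYle : Yx ≤ MY := by
      have harg : μ x / σ x ^ 2 + α * z ≤ M' * I' := by
        have h1 := (abs_le.1 hmd).2
        have h2 : α * z ≤ 0 := mul_nonpos_of_nonneg_of_nonpos hα.le hz.le
        linarith
      have hexp : Real.exp (μ x / σ x ^ 2 + α * z) ≤ Real.exp (M' * I') :=
        Real.exp_le_exp.2 harg
      calc Yx = γ x / σ x ^ 2 * Real.exp (μ x / σ x ^ 2 + α * z) := hYxdef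
        _ ≤ G' * I' * Real.exp (M' * I') :=
          mul_le_mul hgd hexp (Real.exp_pos _).le (mul_nonneg hG'0 hI'0)
        _ = MY := hMYdef.symm
    have htMY : t ≤ MY := htY.trans hYle
    have ht2 : t ^ 2 ≤ MY ^ 2 := pow_le_pow_left₀ hθ0.le htMY 2
    have hlow : -L ≤ 2 * γ x / σ x ^ 2 + μ x ^ 2 / σ x ^ 4 - t ^ 2 - 2 * t := by
      simp only [hLdef]
      linarith [hb0, ht2, htMY, hCB0]
    have haC : -(Cc * L) ≤ c * (2 * γ x / σ x ^ 2 + μ x ^ 2 / σ x ^ 4 - t ^ 2 - 2 * t) := by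
      have h1 := mul_le_mul_of_nonneg_left hlow hc0
      have h2 := mul_le_mul_of_nonneg_right hcC hL0
      linarith [h1, h2]
    linarith [mul_le_mul_of_nonpos_left haC hz.le, mul_nonneg hC0 (sq_nonneg (z + 1)),
      mul_nonneg hC0 (neg_nonneg.2 hz.le)]
end

section
/- Let K ⊆ ℝ^d be a compact set; let b : K → ℝ^d, ρ : K → ℝ^d, and a : K → (d×d real matrices) be continuous, and set A(x) := a(x)·a(x)ᵀ; let σ : K → ℝ and γ : K → ℝ be continuous with σ(x) > 0 and γ(x) > 0 on K, let μ : K → ℝ be continuous, let χ : K → ℝ be continuous with 0 ≤ χ ≤ 1 on K, and let α > 0. For x ∈ K, z ∈ ℝ, p ∈ ℝ^d define θ̃(x, z, p) := θ( (γ(x)/σ(x)²)·exp( μ(x)/σ(x)² + α·z − (α/σ(x))·pᵀ a(x) ρ(x) ) ) and ǎ(x, z, p) := b(x)ᵀp − (α/2)·pᵀA(x)p + (σ(x)²·χ(x)/(2α))·( 2γ(x)/σ(x)² + (μ(x)/σ(x)² − (α/σ(x))·pᵀ a(x) ρ(x))² − θ̃(x,z,p)² − 2·θ̃(x,z,p)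 ). Then for any real numbers z₁ ≤ z₂ there exist constants c > 0 and R > 0 such that |ǎ(x, z, p)| ≤ c·|p|² whenever x ∈ K, z ∈ [z₁, z₂], and |p| ≥ R. -/
open Matrix
set_option maxHeartbeats 1000000

private lemma abs_dot_le' {d : ℕ} (u v : Fin d → ℝ) (cu cv : ℝ)
    (hu : ∀ i, |u i| ≤ cu) (hv : ∀ i, |v i| ≤ cv) (hcu : 0 ≤ cu) :
    |u ⬝ᵥ v| ≤ d * (cu * cv) := by
  calc |u ⬝ᵥ v| ≤ ∑ i, |u i * v i| := Finset.abs_sum_le_sum_abs _ _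
    _ ≤ ∑ _i : Fin d, cu * cv := Finset.sum_le_sum fun i _ => by
        rw [abs_mul]; exact mul_le_mul (hu i) (hv i) (abs_nonneg _) hcu
    _ = d * (cu * cv) := by simp [Finset.sum_const, mul_comm]

private lemma abs_dot_mulVec_le' {d : ℕ} (M : Matrix (Fin d) (Fin d) ℝ) (u v : Fin d → ℝ)
    (C cu cv : ℝ) (hM : ∀ i j, |M i j| ≤ C) (hu : ∀ i, |u i| ≤ cu) (hv : ∀ i, |v i| ≤ cv)
    (hcu : 0 ≤ cu) (hC : 0 ≤ C) :
    |u ⬝ᵥ M.mulVec v| ≤ d * (cu * (d * (C * cv))) := by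
  refine abs_dot_le' u (M.mulVec v) cu (d * (C * cv)) hu (fun i => ?_) hcu
  exact abs_dot_le' (M i) v C cv (hM i) hv hC

private lemma theta_le_max' {θ : ℝ → ℝ}
    (hθ : ∀ y : ℝ, 0 < y → 0 < θ y ∧ θ y * Real.exp (θ y) = y)
    {y : ℝ} (hy : 0 < y) : θ y ≤ max 1 (Real.log y) := by
  obtain ⟨hpos, heq⟩ := hθ y hy
  rcases le_total (θ y) 1 with h | h
  · exact h.trans (le_max_left _ _)
  · refine le_max_of_le_right ?_
    have h1 : Real.exp (θ y) ≤ y := by nlinarith [Real.exp_pos (θ y)]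
    exact (Real.le_log_iff_exp_le hy).mpr h1

private lemma assemble' (Db A2 Cpre G B0 B1 T0 s : ℝ)
    (hDb : 0 ≤ Db) (hA2 : 0 ≤ A2) (hCpre : 0 ≤ Cpre) (hG : 0 ≤ G)
    (hB0 : 0 ≤ B0) (hB1 : 0 ≤ B1) (hT0 : 1 ≤ T0) (hs : 1 ≤ s) :
    Db * s + A2 * s ^ 2 + Cpre * (G + (B0 + B1 * s) ^ 2 + (T0 + B1 * s) ^ 2
        + 2 * (T0 + B1 * s))
    ≤ (Cpre * G + (Db + Cpre * (2 * (T0 + B1))) + (A2 + Cpre * ((B0 + B1) ^ 2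
        + (T0 + B1) ^ 2)) + 1) * s ^ 2 := by
  have hs0 : (0:ℝ) ≤ s := by linarith
  have hss : s ≤ s ^ 2 := by
    calc s = s * 1 := (mul_one s).symm
      _ ≤ s * s := mul_le_mul_of_nonneg_left hs hs0
      _ = s ^ 2 := (sq s).symm
  have h1s : 1 ≤ s ^ 2 := by
    calc (1:ℝ) = 1 * 1 := by ring
      _ ≤ s * s := mul_le_mul hs hs zero_le_one hs0
      _ = s ^ 2 := (sq s).symm
  have hBs : B0 + B1 * s ≤ (B0 + B1) * s := by
    have h := le_mul_of_one_le_right hB0 hs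
    linarith
  have hT0' : (0:ℝ) ≤ T0 := by linarith
  have hTs : T0 + B1 * s ≤ (T0 + B1) * s := by
    have h := le_mul_of_one_le_right hT0' hs
    linarith
  have hTB : (0:ℝ) ≤ T0 + B1 := by linarith
  have hBsq : (B0 + B1 * s) ^ 2 ≤ (B0 + B1) ^ 2 * s ^ 2 := by
    calc (B0 + B1 * s) ^ 2 ≤ ((B0 + B1) * s) ^ 2 := by
          apply pow_le_pow_left₀ (by positivity) hBs
      _ = (B0 + B1) ^ 2 * s ^ 2 := by ring
  have hTsq : (T0 + B1 * s) ^ 2 ≤ (T0 + B1) ^ 2 * s ^ 2 := by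
    calc (T0 + B1 * s) ^ 2 ≤ ((T0 + B1) * s) ^ 2 := by
          apply pow_le_pow_left₀ (by positivity) hTs
      _ = (T0 + B1) ^ 2 * s ^ 2 := by ring
  have f1 : Db * s ≤ Db * s ^ 2 := mul_le_mul_of_nonneg_left hss hDb
  have f2 : Cpre * (B0 + B1 * s) ^ 2 ≤ Cpre * ((B0 + B1) ^ 2 * s ^ 2) :=
    mul_le_mul_of_nonneg_left hBsq hCpre
  have f3 : Cpre * (T0 + B1 * s) ^ 2 ≤ Cpre * ((T0 + B1) ^ 2 * s ^ 2) :=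
    mul_le_mul_of_nonneg_left hTsq hCpre
  have f4 : Cpre * (2 * (T0 + B1 * s)) ≤ Cpre * (2 * ((T0 + B1) * s ^ 2)) := by
    have h1 : T0 ≤ T0 * s ^ 2 := le_mul_of_one_le_right hT0' h1s
    have h2 : B1 * s ≤ B1 * s ^ 2 := mul_le_mul_of_nonneg_left hss hB1
    have h : T0 + B1 * s ≤ (T0 + B1) * s ^ 2 := by nlinarith [h1, h2]
    exact mul_le_mul_of_nonneg_left (by linarith) hCpre
  have f5 : Cpre * G ≤ Cpre * G * s ^ 2 := le_mul_of_one_le_right (by positivity) h1s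
  linarith [f1, f2, f3, f4, f5, sq_nonneg s]

/-- Quadratic-in-gradient growth of the full localized HJB nonlinearity (the paper's
Lemma `lieb_a_Op`): on a compact `K ⊆ ℝ^d`, with continuous `b, ρ, a` (and
`A = a aᵀ`), continuous `σ, γ > 0`, continuous `μ`, a cutoff `0 ≤ χ ≤ 1`, risk
aversion `α > 0`, and `θ` the Lambert-W type function (`0 < θ y`,
`θ y · exp (θ y) = y` for `y > 0`): for any `z₁ ≤ z₂` there are `c > 0` and `R > 0`
such that `|ǎ(x, z, p)| ≤ c |p|²` whenever `x ∈ K`, `z ∈ [z₁, z₂]`, `|p| ≥ R`, where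
`ǎ(x,z,p) = bᵀp − (α/2) pᵀAp + (σ²χ/(2α)) (2γ/σ² + (μ/σ² − (α/σ) pᵀaρ)²
  − θ̃² − 2θ̃)` and `θ̃ = θ((γ/σ²) exp(μ/σ² + αz − (α/σ) pᵀaρ))`. -/
theorem hjb_nonlinearity_quadratic_growth {d : ℕ}
    (K : Set (EuclideanSpace ℝ (Fin d))) (hK : IsCompact K)
    (b ρ : EuclideanSpace ℝ (Fin d) → Fin d → ℝ)
    (a : EuclideanSpace ℝ (Fin d) → Matrix (Fin d) (Fin d) ℝ)
    (hb : ContinuousOn b K) (hρ : ContinuousOn ρ K) (ha : ContinuousOn a K)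
    (σ γ μ χ : EuclideanSpace ℝ (Fin d) → ℝ)
    (hσ : ContinuousOn σ K) (hγ : ContinuousOn γ K)
    (hμ : ContinuousOn μ K) (hχ : ContinuousOn χ K)
    (hσ_pos : ∀ x ∈ K, 0 < σ x) (hγ_pos : ∀ x ∈ K, 0 < γ x)
    (hχ01 : ∀ x ∈ K, 0 ≤ χ x ∧ χ x ≤ 1)
    (α : ℝ) (hα : 0 < α)
    (θ : ℝ → ℝ)
    (hθ : ∀ y : ℝ, 0 < y → 0 < θ y ∧ θ y * Real.exp (θ y) = y)
    (z₁ z₂ : ℝ) (hz : z₁ ≤ z₂) :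
    ∃ c > (0 : ℝ), ∃ R > (0 : ℝ), ∀ x ∈ K, ∀ z ∈ Set.Icc z₁ z₂, ∀ p : Fin d → ℝ,
      R ≤ Real.sqrt (∑ i, p i ^ 2) →
      |b x ⬝ᵥ p - α / 2 * (p ⬝ᵥ (a x * (a x)ᵀ).mulVec p)
        + σ x ^ 2 * χ x / (2 * α) *
          (2 * γ x / σ x ^ 2
            + (μ x / σ x ^ 2 - α / σ x * (p ⬝ᵥ (a x).mulVec (ρ x))) ^ 2
            - (θ (γ x / σ x ^ 2 *
                Real.exp (μ x / σ x ^ 2 + α * z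
                  - α / σ x * (p ⬝ᵥ (a x).mulVec (ρ x))))) ^ 2
            - 2 * θ (γ x / σ x ^ 2 *
                Real.exp (μ x / σ x ^ 2 + α * z
                  - α / σ x * (p ⬝ᵥ (a x).mulVec (ρ x)))))|
      ≤ c * Real.sqrt (∑ i, p i ^ 2) ^ 2 := by
  rcases K.eq_empty_or_nonempty with hKe | hne
  · refine ⟨1, one_pos, 1, one_pos, fun x hx => ?_⟩
    rw [hKe] at hx; exact absurd hx (Set.notMem_empty x)
  obtain ⟨x₀, hx₀⟩ := hne
  have hbd : ∀ f : EuclideanSpace ℝ (Fin d) → ℝ, ContinuousOn f K →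
      ∃ C, ∀ x ∈ K, f x ≤ C := by
    intro f hf
    obtain ⟨C, hC⟩ := hK.exists_bound_of_continuousOn hf
    exact ⟨C, fun x hx => (le_abs_self _).trans (by simpa [Real.norm_eq_abs] using hC x hx)⟩
  obtain ⟨Cb, hCb⟩ := hbd (fun x => ∑ i, |b x i|) (by fun_prop)
  obtain ⟨Ca, hCa⟩ := hbd (fun x => ∑ i, ∑ j, |a x i j|) (by fun_prop)
  obtain ⟨Cρ, hCρ⟩ := hbd (fun x => ∑ i, |ρ x i|) (by fun_prop)
  obtain ⟨Cσ, hCσ⟩ := hbd σ hσ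
  obtain ⟨Cγ, hCγ⟩ := hbd γ hγ
  obtain ⟨Cμ, hCμ⟩ := hbd (fun x => |μ x|) hμ.abs
  obtain ⟨x₁, hx₁K, hmin⟩ := hK.exists_isMinOn ⟨x₀, hx₀⟩ hσ
  set σ₀ := σ x₁ with hσ₀def
  have hσ₀ : 0 < σ₀ := hσ_pos x₁ hx₁K
  have hσlo : ∀ x ∈ K, σ₀ ≤ σ x := fun x hx => isMinOn_iff.mp hmin x hx
  have hCb0 : 0 ≤ Cb := le_trans (Finset.sum_nonneg fun i _ => abs_nonneg _) (hCb x₀ hx₀)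
  have hCa0 : 0 ≤ Ca := le_trans
    (Finset.sum_nonneg fun i _ => Finset.sum_nonneg fun j _ => abs_nonneg _) (hCa x₀ hx₀)
  have hCρ0 : 0 ≤ Cρ := le_trans (Finset.sum_nonneg fun i _ => abs_nonneg _) (hCρ x₀ hx₀)
  have hCσ0 : 0 < Cσ := lt_of_lt_of_le (hσ_pos x₀ hx₀) (hCσ x₀ hx₀)
  have hCγ0 : 0 < Cγ := lt_of_lt_of_le (hγ_pos x₀ hx₀) (hCγ x₀ hx₀)
  have hCμ0 : 0 ≤ Cμ := le_trans (abs_nonneg _) (hCμ x₀ hx₀)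
  have hbE : ∀ x ∈ K, ∀ i, |b x i| ≤ Cb := fun x hx i =>
    (Finset.single_le_sum (fun j _ => abs_nonneg _) (Finset.mem_univ i)).trans (hCb x hx)
  have hρE : ∀ x ∈ K, ∀ i, |ρ x i| ≤ Cρ := fun x hx i =>
    (Finset.single_le_sum (fun j _ => abs_nonneg _) (Finset.mem_univ i)).trans (hCρ x hx)
  have haE : ∀ x ∈ K, ∀ i j, |a x i j| ≤ Ca := by
    intro x hx i j
    have h1 : |a x i j| ≤ ∑ j, |a x i j| :=
      Finset.single_le_sum (f := fun j => |a x i j|) (fun k _ => abs_nonneg _)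
        (Finset.mem_univ j)
    have h2 : (∑ j, |a x i j|) ≤ ∑ i, ∑ j, |a x i j| :=
      Finset.single_le_sum (f := fun i => ∑ j, |a x i j|)
        (fun k _ => Finset.sum_nonneg fun _ _ => abs_nonneg _) (Finset.mem_univ i)
    exact le_trans (le_trans h1 h2) (hCa x hx)
  have hAE : ∀ x ∈ K, ∀ i j, |(a x * (a x)ᵀ) i j| ≤ d * (Ca * Ca) := by
    intro x hx i j
    have he : (a x * (a x)ᵀ) i j = ∑ k, a x i k * a x j k := by simp [Matrix.mul_apply]
    rw [he]
    calc |∑ k, a x i k * a x j k| ≤ ∑ k, |a x i k * a x j k| := Finset.abs_sum_le_sum_abs _ _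
      _ ≤ ∑ _k : Fin d, Ca * Ca := Finset.sum_le_sum fun k _ => by
          rw [abs_mul]; exact mul_le_mul (haE x hx i k) (haE x hx j k) (abs_nonneg _) hCa0
      _ = d * (Ca * Ca) := by simp [Finset.sum_const, mul_comm]
  have hσ₀2 : (0:ℝ) < σ₀ ^ 2 := by positivity
  set B0 : ℝ := Cμ / σ₀ ^ 2 with hB0def
  set B1 : ℝ := α / σ₀ * ((d:ℝ) * ((d:ℝ) * (Ca * Cρ))) with hB1def
  set T0 : ℝ := 1 + |Real.log (Cγ / σ₀ ^ 2)| + B0 + α * (|z₁| + |z₂|) with hT0def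
  set CAq : ℝ := (d:ℝ) * ((d:ℝ) * ((d:ℝ) * (Ca * Ca))) with hCAqdef
  set Cpre : ℝ := Cσ ^ 2 / (2 * α) with hCpredef
  have hB0n : 0 ≤ B0 := div_nonneg hCμ0 (sq_nonneg _)
  have hB1n : 0 ≤ B1 := mul_nonneg (div_nonneg hα.le hσ₀.le) (by positivity)
  have hT0n : 1 ≤ T0 := by
    have h1 : (0:ℝ) ≤ α * (|z₁| + |z₂|) := by positivity
    have h2 : (0:ℝ) ≤ |Real.log (Cγ / σ₀ ^ 2)| := abs_nonneg _
    rw [hT0def]; linarith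
  have hCAqn : 0 ≤ CAq := by positivity
  have hCpren : 0 < Cpre := by rw [hCpredef]; positivity
  set P0 : ℝ := Cpre * (2 * Cγ / σ₀ ^ 2) with hP0def
  set P1 : ℝ := (d:ℝ) * Cb + Cpre * (2 * (T0 + B1)) with hP1def
  set P2 : ℝ := α / 2 * CAq + Cpre * ((B0 + B1) ^ 2 + (T0 + B1) ^ 2) with hP2def
  have hP0n : 0 ≤ P0 :=
    mul_nonneg hCpren.le (div_nonneg (by linarith) (sq_nonneg _))
  have hP1n : 0 ≤ P1 := add_nonneg (mul_nonneg (Nat.cast_nonneg d) hCb0)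
    (mul_nonneg hCpren.le (by linarith))
  have hP2n : 0 ≤ P2 := add_nonneg (mul_nonneg (by linarith) hCAqn)
    (mul_nonneg hCpren.le (by positivity))
  clear_value σ₀ B0 B1 T0 CAq Cpre P0 P1 P2
  refine ⟨P0 + P1 + P2 + 1, by linarith, 1, one_pos, ?_⟩
  intro x hx z hzmem p hps
  set s := Real.sqrt (∑ i, p i ^ 2) with hsdef
  have hs1 : 1 ≤ s := hps
  have hs0 : 0 ≤ s := by linarith
  have hpi : ∀ i, |p i| ≤ s := by
    intro i; rw [← Real.sqrt_sq_eq_abs]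
    exact Real.sqrt_le_sqrt (Finset.single_le_sum (fun j _ => sq_nonneg (p j))
      (Finset.mem_univ i))
  set q := p ⬝ᵥ (a x).mulVec (ρ x) with hqdef
  have hσx := hσ_pos x hx
  have hγx := hγ_pos x hx
  have hσlo' : σ₀ ≤ σ x := hσlo x hx
  have hsqle : σ₀ ^ 2 ≤ σ x ^ 2 := pow_le_pow_left₀ hσ₀.le hσlo' 2
  have hq : |q| ≤ (d:ℝ) * ((d:ℝ) * (Ca * Cρ)) * s := by
    have h := abs_dot_mulVec_le' (a x) p (ρ x) Ca s Cρ (haE x hx) hpi (hρE x hx) hs0 hCa0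
    calc |q| ≤ (d:ℝ) * (s * ((d:ℝ) * (Ca * Cρ))) := h
      _ = (d:ℝ) * ((d:ℝ) * (Ca * Cρ)) * s := by ring
  have hfrac : α / σ x ≤ α / σ₀ := div_le_div₀ hα.le le_rfl hσ₀ hσlo'
  have hfrac0 : 0 ≤ α / σ x := div_nonneg hα.le hσx.le
  have hαq : |α / σ x * q| ≤ B1 * s := by
    rw [abs_mul, abs_of_nonneg hfrac0]
    calc α / σ x * |q| ≤ α / σ₀ * ((d:ℝ) * ((d:ℝ) * (Ca * Cρ)) * s) :=
          mul_le_mul hfrac hq (abs_nonneg _) (div_nonneg hα.le hσ₀.le)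
      _ = B1 * s := by rw [hB1def]; ring
  have hμx : |μ x / σ x ^ 2| ≤ B0 := by
    rw [hB0def, abs_div, abs_of_nonneg (le_of_lt (by positivity : (0:ℝ) < σ x ^ 2))]
    exact div_le_div₀ hCμ0 (hCμ x hx) hσ₀2 hsqle
  set E := μ x / σ x ^ 2 + α * z - α / σ x * q with hEdef
  set y := γ x / σ x ^ 2 * Real.exp E with hydef
  have hy : 0 < y := mul_pos (div_pos hγx (by positivity)) (Real.exp_pos _)
  clear_value s q E y
  have hzabs : |z| ≤ |z₁| + |z₂| := by
    rcases hzmem with ⟨hz1, hz2⟩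
    rw [abs_le]; constructor
    · have := neg_abs_le z₁; have := abs_nonneg z₂; linarith
    · have := le_abs_self z₂; have := abs_nonneg z₁; linarith
  have hlogy : Real.log y ≤ T0 - 1 + B1 * s := by
    rw [hydef, Real.log_mul (ne_of_gt (div_pos hγx (by positivity))) (Real.exp_ne_zero _),
      Real.log_exp]
    have h1 : Real.log (γ x / σ x ^ 2) ≤ |Real.log (Cγ / σ₀ ^ 2)| := by
      refine le_trans (Real.log_le_log (div_pos hγx (by positivity)) ?_) (le_abs_self _)
      exact div_le_div₀ hCγ0.le (hCγ x hx) hσ₀2 hsqle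
    have h2 : E ≤ B0 + α * (|z₁| + |z₂|) + B1 * s := by
      have e1 : μ x / σ x ^ 2 ≤ B0 := (le_abs_self _).trans hμx
      have e2 : α * z ≤ α * (|z₁| + |z₂|) :=
        mul_le_mul_of_nonneg_left ((le_abs_self z).trans hzabs) hα.le
      have e3 : -(α / σ x * q) ≤ B1 * s := (neg_le_abs _).trans hαq
      rw [hEdef]; linarith
    rw [hT0def]; linarith
  have hθy := hθ y hy
  have hθpos : 0 < θ y := hθy.1
  have hθT : θ y ≤ T0 + B1 * s := by
    have hmax := theta_le_max' hθ hy
    have hBs : 0 ≤ B1 * s := mul_nonneg hB1n hs0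
    exact hmax.trans (max_le (by linarith) (by linarith))
  have hquad : |p ⬝ᵥ (a x * (a x)ᵀ).mulVec p| ≤ CAq * s ^ 2 := by
    have h := abs_dot_mulVec_le' (a x * (a x)ᵀ) p p ((d:ℝ) * (Ca * Ca)) s s
      (hAE x hx) hpi hpi hs0 (by positivity)
    calc |p ⬝ᵥ (a x * (a x)ᵀ).mulVec p| ≤ (d:ℝ) * (s * ((d:ℝ) * ((d:ℝ) * (Ca * Ca) * s))) := h
      _ = CAq * s ^ 2 := by rw [hCAqdef]; ring
  have hbp : |b x ⬝ᵥ p| ≤ (d:ℝ) * Cb * s := by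
    have h := abs_dot_le' (b x) p Cb s (hbE x hx) hpi hCb0
    calc |b x ⬝ᵥ p| ≤ (d:ℝ) * (Cb * s) := h
      _ = (d:ℝ) * Cb * s := by ring
  have hχn := (hχ01 x hx).1
  have hχ1 := (hχ01 x hx).2
  have hpre0 : 0 ≤ σ x ^ 2 * χ x / (2 * α) := by positivity
  have hpre : σ x ^ 2 * χ x / (2 * α) ≤ Cpre := by
    rw [hCpredef]
    refine div_le_div₀ (sq_nonneg Cσ) ?_ (by linarith) le_rfl
    have hσC : σ x ≤ Cσ := hCσ x hx
    have h1 : σ x ^ 2 * χ x ≤ σ x ^ 2 := by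
      have := mul_le_of_le_one_right (sq_nonneg (σ x)) hχ1
      linarith
    have h2 : σ x ^ 2 ≤ Cσ ^ 2 := pow_le_pow_left₀ hσx.le hσC 2
    linarith
  have h2γ : 0 < 2 * γ x / σ x ^ 2 := by positivity
  have h2γle : 2 * γ x / σ x ^ 2 ≤ 2 * Cγ / σ₀ ^ 2 :=
    div_le_div₀ (by linarith) (by linarith [hCγ x hx]) hσ₀2 hsqle
  have hE1 : |μ x / σ x ^ 2 - α / σ x * q| ≤ B0 + B1 * s :=
    (abs_sub _ _).trans (add_le_add hμx hαq)
  have hE1sq : (μ x / σ x ^ 2 - α / σ x * q) ^ 2 ≤ (B0 + B1 * s) ^ 2 := by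
    rw [← sq_abs]; exact pow_le_pow_left₀ (abs_nonneg _) hE1 2
  have hθsq : θ y ^ 2 ≤ (T0 + B1 * s) ^ 2 := pow_le_pow_left₀ hθpos.le hθT 2
  have hB1s : (0:ℝ) ≤ B1 * s := mul_nonneg hB1n hs0
  have hTpos : (0:ℝ) < T0 + B1 * s := by linarith
  have hInner : |2 * γ x / σ x ^ 2 + (μ x / σ x ^ 2 - α / σ x * q) ^ 2 - θ y ^ 2 - 2 * θ y|
      ≤ 2 * Cγ / σ₀ ^ 2 + (B0 + B1 * s) ^ 2 + (T0 + B1 * s) ^ 2 + 2 * (T0 + B1 * s) := by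
    have hu2 : (0:ℝ) ≤ (B0 + B1 * s) ^ 2 := sq_nonneg _
    have hv2 : (0:ℝ) ≤ (T0 + B1 * s) ^ 2 := sq_nonneg _
    have hθ2 : (0:ℝ) ≤ θ y ^ 2 := sq_nonneg _
    have hE2 : (0:ℝ) ≤ (μ x / σ x ^ 2 - α / σ x * q) ^ 2 := sq_nonneg _
    rw [abs_le]
    constructor
    · linarith
    · linarith
  have hpreabs : |σ x ^ 2 * χ x / (2 * α)| ≤ Cpre := by
    rw [abs_of_nonneg hpre0]; exact hpre
  have habs : |b x ⬝ᵥ p - α / 2 * (p ⬝ᵥ (a x * (a x)ᵀ).mulVec p)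
        + σ x ^ 2 * χ x / (2 * α) *
          (2 * γ x / σ x ^ 2 + (μ x / σ x ^ 2 - α / σ x * q) ^ 2 - θ y ^ 2 - 2 * θ y)|
      ≤ (d:ℝ) * Cb * s + α / 2 * (CAq * s ^ 2)
        + Cpre * (2 * Cγ / σ₀ ^ 2 + (B0 + B1 * s) ^ 2 + (T0 + B1 * s) ^ 2
            + 2 * (T0 + B1 * s)) := by
    have t1 := abs_add_le (b x ⬝ᵥ p - α / 2 * (p ⬝ᵥ (a x * (a x)ᵀ).mulVec p))
      (σ x ^ 2 * χ x / (2 * α) *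
        (2 * γ x / σ x ^ 2 + (μ x / σ x ^ 2 - α / σ x * q) ^ 2 - θ y ^ 2 - 2 * θ y))
    have t2 := abs_sub (b x ⬝ᵥ p) (α / 2 * (p ⬝ᵥ (a x * (a x)ᵀ).mulVec p))
    have t3 : |α / 2 * (p ⬝ᵥ (a x * (a x)ᵀ).mulVec p)| ≤ α / 2 * (CAq * s ^ 2) := by
      rw [abs_mul, abs_of_nonneg (by linarith : (0:ℝ) ≤ α / 2)]
      exact mul_le_mul_of_nonneg_left hquad (by linarith)
    have t4 : |σ x ^ 2 * χ x / (2 * α) *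
        (2 * γ x / σ x ^ 2 + (μ x / σ x ^ 2 - α / σ x * q) ^ 2 - θ y ^ 2 - 2 * θ y)|
        ≤ Cpre * (2 * Cγ / σ₀ ^ 2 + (B0 + B1 * s) ^ 2 + (T0 + B1 * s) ^ 2
            + 2 * (T0 + B1 * s)) := by
      rw [abs_mul]
      exact mul_le_mul hpreabs hInner (abs_nonneg _) hCpren.le
    linarith
  refine habs.trans ?_
  rw [hP0def, hP1def, hP2def]
  have hfin := assemble' ((d:ℝ) * Cb) (α / 2 * CAq) Cpre (2 * Cγ / σ₀ ^ 2) B0 B1 T0 s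
    (mul_nonneg (Nat.cast_nonneg d) hCb0) (mul_nonneg (by linarith) hCAqn)
    hCpren.le (div_nonneg (by linarith) (sq_nonneg _)) hB0n hB1n hT0n hs1
  linarith
end
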